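/- For n ≥ 1, the independence complex of the graph X_n^{(1)} = H_{1×1×n} \ {v^1_{2n+1}} is homotopy equivalent to the sphere S^n. -/

import Mathlib

open Function Set

/-- A set of vertices of a simple graph is independent if its elements are
pairwise non-adjacent.  The independence complex `Ind G` is the simplicial
complex whose faces are exactly the independent sets. -/
def isIndepSet {V : Type*} (G : SimpleGraph V) (s : Set V) : Prop :=
  s.Pairwise fun a b => ¬ G.Adj a b

/-- Geometric realization of the subcomplex of the independence complex of `G`
consisting of the independent sets contained in `S` (so `S = univ` gives
`Ind G`, `S = {v}ᶜ` gives `Ind (G \ v)`, and `S = N[v]ᶜ` gives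
`Ind (G \ N[v])`): convex combinations of vertices whose support is a face. -/
def indRealizationIn {V : Type*} (G : SimpleGraph V) (S : Set V) : Set (V → ℝ) :=
  {f | (∀ v, 0 ≤ f v) ∧ (Function.support f).Finite ∧ Function.support f ⊆ S ∧
       isIndepSet G (Function.support f) ∧ ∑ᶠ v, f v = 1}

/-- Geometric realization of the independence complex `Ind G`. -/
def indRealization {V : Type*} (G : SimpleGraph V) : Set (V → ℝ) :=
  indRealizationIn G Set.univ

/-- The (unreduced) suspension of a topological space. -/
def Susp (X : Type*) [TopologicalSpace X] : Type _ :=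
  Quot (fun p q : X × unitInterval => (p.2 = 0 ∧ q.2 = 0) ∨ (p.2 = 1 ∧ q.2 = 1))

instance (X : Type*) [TopologicalSpace X] : TopologicalSpace (Susp X) :=
  inferInstanceAs (TopologicalSpace (Quot _))

/-- The wedge of two pointed topological spaces. -/
def WedgeAt (X Y : Type*) [TopologicalSpace X] [TopologicalSpace Y] (x₀ : X) (y₀ : Y) :
    Type _ :=
  Quot (fun p q : X ⊕ Y => p = Sum.inl x₀ ∧ q = Sum.inr y₀)

instance (X Y : Type*) [TopologicalSpace X] [TopologicalSpace Y] (x₀ : X) (y₀ : Y) :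
    TopologicalSpace (WedgeAt X Y x₀ y₀) :=
  inferInstanceAs (TopologicalSpace (Quot _))

/-- The sphere `S^{m-1}`, realized as the unit sphere of `ℝ^m`. -/
def sphere' (m : ℕ) : Set (EuclideanSpace ℝ (Fin m)) := Metric.sphere 0 1

/-- A wedge of two `m`-dimensional spheres: the two unit spheres of `ℝ^{m+1}`
centered at `±e₀`, which are tangent at the origin. -/
def sphereWedge (m : ℕ) : Set (EuclideanSpace ℝ (Fin (m + 1))) :=
  {x | dist x (EuclideanSpace.single (0 : Fin (m + 1)) (1 : ℝ)) = 1 ∨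
       dist x (-(EuclideanSpace.single (0 : Fin (m + 1)) (1 : ℝ))) = 1}

/-- The hexagonal line tiling graph `H_{1×1×n}`: two rows (row `j` carries the
vertices `v^{j+1}_1, …, v^{j+1}_{2n+1}`, column `i : Fin (2n+1)` being the
1-indexed vertex `v^{j+1}_{i+1}`), each row forming a path, together with the
rung edges `{v^1_{2t-1}, v^2_{2t-1}}`, i.e. rungs at even 0-indexed columns. -/
def hexRow (n : ℕ) : SimpleGraph (Fin 2 × Fin (2 * n + 1)) :=
  SimpleGraph.fromRel (fun p q =>
    (p.1 = q.1 ∧ (p.2 : ℕ) + 1 = (q.2 : ℕ)) ∨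
    (p.1 ≠ q.1 ∧ p.2 = q.2 ∧ (p.2 : ℕ) % 2 = 0))

/-- The last vertex `v^1_{2n+1}` of the top row of `H_{1×1×n}`. -/
def hexTop (n : ℕ) : Fin 2 × Fin (2 * n + 1) := (0, ⟨2 * n, by omega⟩)

/-- `X_n^{(1)} = H_{1×1×n} \ {v^1_{2n+1}}` : realization of its independence
complex, as the subcomplex of `Ind (H_{1×1×n})` of faces avoiding `v^1_{2n+1}`. -/
def Xn1 (n : ℕ) : Set (Fin 2 × Fin (2 * n + 1) → ℝ) :=
  indRealizationIn (hexRow n) ({hexTop n}ᶜ)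

/-- `X_n^{(2)} = H_{1×1×n} \ N[v^1_{2n+1}]` : realization of its independence
complex, as the subcomplex of `Ind (H_{1×1×n})` of faces avoiding `N[v^1_{2n+1}]`. -/
def Xn2 (n : ℕ) : Set (Fin 2 × Fin (2 * n + 1) → ℝ) :=
  indRealizationIn (hexRow n) ((insert (hexTop n) ((hexRow n).neighborSet (hexTop n)))ᶜ)


/-!
If `u` and `v` are non-adjacent and every neighbour of `u` is a neighbour of `v`, then shifting
the weight of `v` onto `u` is a strong deformation retraction of `Ind G` onto `Ind (G \ v)`.
In `H_{1×1×n} \ v^1_{2n+1}` fix the induced matching consisting of the edges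
`{v^{r_j}_{2j+1}, v^{r_j}_{2j+2}}` for `j < n`, with rows `r_j` alternating and `r_{n-1} = 1`,
together with `{v^2_{2n}, v^2_{2n+1}}`. Deleting the vertices outside the matching from right to
left, each one is, when it is deleted, adjacent to an end of a matching edge whose other end is
a leaf, so the first fact applies. What is left is an induced matching with `n + 1`
edges, whose independence complex is the boundary of the cross-polytope, the unit sphere of
`ℓ¹(Fin (n + 1))`, hence `S^n`.
-/

open scoped unitInterval ContinuousMap

def homotopyEquivOfDeformationRetract {Y : Type*} [TopologicalSpace Y] {X A : Set Y}
    (hAX : A ⊆ X) (H : ℝ → Y → Y) (hH : Continuous (uncurry H))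
    (hX : ∀ t ∈ I, MapsTo (H t) X X) (h0 : ∀ x ∈ X, H 0 x = x)
    (h1 : MapsTo (H 1) X A) (hA : ∀ a ∈ A, H 1 a = a) : X ≃ₕ A where
  toFun := ⟨h1.restrict, (hH.comp (continuous_const.prodMk continuous_subtype_val)).subtype_mk _⟩
  invFun := ⟨inclusion hAX, continuous_inclusion hAX⟩
  left_inv := ContinuousMap.Homotopic.symm ⟨{
      toFun := fun p => ⟨H p.1 p.2, hX p.1 p.1.2 p.2.2⟩
      continuous_toFun :=
        (hH.comp (continuous_subtype_val.prodMap continuous_subtype_val)).subtype_mk _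
      map_zero_left := fun x => Subtype.ext (h0 x x.2)
      map_one_left := fun _ => rfl }⟩
  right_inv := by
    convert ContinuousMap.Homotopic.refl (ContinuousMap.id A)
    ext a
    exact hA a a.2

section IndRealization

variable {V : Type*} {G : SimpleGraph V} {S T : Set V} {u v : V} {f : V → ℝ}

lemma indRealizationIn_mono (h : S ⊆ T) : indRealizationIn G S ⊆ indRealizationIn G T :=
  fun _ ⟨h0, hfin, hS, hind, hsum⟩ => ⟨h0, hfin, hS.trans h, hind, hsum⟩

lemma apply_eq_zero_of_mem_indRealizationIn_diff (hf : f ∈ indRealizationIn G (S \ {v})) :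
    f v = 0 :=
  notMem_support.1 fun hv => (hf.2.2.1 hv).2 rfl

lemma isIndepSet_insert_of_dominates {s : Set V} (hs : isIndepSet G s) (hsS : s ⊆ S)
    (hv : v ∈ s) (hadj : ¬ G.Adj u v) (hdom : ∀ w ∈ S, G.Adj u w → G.Adj v w) :
    isIndepSet G (insert u s) := by
  have hu : ∀ w ∈ s, ¬ G.Adj u w := fun w hw huw =>
    hs hv hw (fun h => hadj (h ▸ huw)) (hdom w (hsS hw) huw)
  exact Set.pairwise_insert.2 ⟨hs, fun w hw _ => ⟨hu w hw, fun hwu => hu w hw hwu.symm⟩⟩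

variable [Fintype V]

lemma mem_indRealizationIn_iff :
    f ∈ indRealizationIn G S ↔
      0 ≤ f ∧ support f ⊆ S ∧ isIndepSet G (support f) ∧ ∑ v, f v = 1 := by
  rw [indRealizationIn, mem_ofPred_eq, finsum_eq_sum_of_fintype]
  exact ⟨fun ⟨h0, _, hS, hind, hsum⟩ => ⟨h0, hS, hind, hsum⟩,
    fun ⟨h0, hS, hind, hsum⟩ => ⟨h0, toFinite _, hS, hind, hsum⟩⟩

end IndRealization

section Fold

variable {V : Type*} [DecidableEq V] {G : SimpleGraph V} {S : Set V} {u v : V} {t : ℝ}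
  {f : V → ℝ}

def shiftMass (u v : V) (t : ℝ) (f : V → ℝ) : V → ℝ :=
  f + (t * f v) • (Pi.single u 1 - Pi.single v 1)

lemma continuous_shiftMass : Continuous (uncurry (shiftMass (V := V) u v)) := by
  unfold shiftMass uncurry
  fun_prop

lemma shiftMass_zero (f : V → ℝ) : shiftMass u v 0 f = f := by
  simp [shiftMass]

lemma shiftMass_of_apply_eq_zero (hf : f v = 0) : shiftMass u v t f = f := by
  simp [shiftMass, hf]

lemma shiftMass_one_apply (huv : u ≠ v) : shiftMass u v 1 f v = 0 := by
  simp [shiftMass, huv.symm]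

lemma shiftMass_nonneg (huv : u ≠ v) (ht : t ∈ I) (hf : 0 ≤ f) : 0 ≤ shiftMass u v t f := by
  intro w
  have h0 : ∀ x, 0 ≤ f x := hf
  have hfv : 0 ≤ t * f v := mul_nonneg ht.1 (h0 v)
  simp only [shiftMass, Pi.zero_apply, Pi.add_apply, Pi.smul_apply, Pi.sub_apply,
    Pi.single_apply, smul_eq_mul]
  split_ifs with hwu hwv hwv
  · exact absurd (hwu.symm.trans hwv) huv
  · nlinarith [h0 w]
  · subst hwv; nlinarith [h0 w, ht.2]
  · nlinarith [h0 w]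

lemma support_shiftMass_subset : support (shiftMass u v t f) ⊆ insert u (support f) := by
  intro w hw
  by_contra! h
  rw [mem_insert_iff, not_or, notMem_support] at h
  apply hw
  by_cases hwv : w = v
  · subst hwv; simp [shiftMass, h.2]
  · simp [shiftMass, h.1, h.2, hwv]

variable [Fintype V]

lemma sum_shiftMass : ∑ w, shiftMass u v t f w = ∑ w, f w := by
  simp [shiftMass, Finset.sum_add_distrib, ← Finset.mul_sum]

section Dominates

variable (hu : u ∈ S) (huv : u ≠ v) (hadj : ¬ G.Adj u v)
  (hdom : ∀ w ∈ S, G.Adj u w → G.Adj v w)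
include hu huv hadj hdom

lemma mapsTo_shiftMass (ht : t ∈ I) :
    MapsTo (shiftMass u v t) (indRealizationIn G S) (indRealizationIn G S) := by
  intro f hf
  by_cases hfv : f v = 0
  · rwa [shiftMass_of_apply_eq_zero hfv]
  rw [mem_indRealizationIn_iff] at hf ⊢
  obtain ⟨h0, hS, hind, hsum⟩ := hf
  exact ⟨shiftMass_nonneg huv ht h0, support_shiftMass_subset.trans (insert_subset hu hS),
    (isIndepSet_insert_of_dominates hind hS hfv hadj hdom).mono support_shiftMass_subset,
    sum_shiftMass.trans hsum⟩

lemma mapsTo_shiftMass_one :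
    MapsTo (shiftMass u v 1) (indRealizationIn G S) (indRealizationIn G (S \ {v})) := by
  intro f hf
  obtain ⟨h0, hfin, hS, hind, hsum⟩ :=
    mapsTo_shiftMass hu huv hadj hdom ⟨zero_le_one, le_rfl⟩ hf
  refine ⟨h0, hfin, fun w hw => ⟨hS hw, ?_⟩, hind, hsum⟩
  rintro rfl
  exact hw (shiftMass_one_apply huv)

theorem nonempty_homotopyEquiv_diff_of_dominates :
    Nonempty (indRealizationIn G S ≃ₕ indRealizationIn G (S \ {v})) :=
  ⟨homotopyEquivOfDeformationRetract (indRealizationIn_mono sdiff_subset) (shiftMass u v)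
    continuous_shiftMass (fun _ ht => mapsTo_shiftMass hu huv hadj hdom ht)
    (fun f _ => shiftMass_zero f) (mapsTo_shiftMass_one hu huv hadj hdom)
    (fun _ hf => shiftMass_of_apply_eq_zero (apply_eq_zero_of_mem_indRealizationIn_diff hf))⟩

end Dominates

theorem nonempty_homotopyEquiv_diff_of_leaf {x : V} (hu : u ∈ S) (hv : v ∈ S)
    (hleaf : ∀ w ∈ S, G.Adj u w → w = x) (hxv : G.Adj x v) (hvu : v ≠ u) :
    Nonempty (indRealizationIn G S ≃ₕ indRealizationIn G (S \ {v})) := by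
  refine nonempty_homotopyEquiv_diff_of_dominates hu hvu.symm (fun huv => ?_) fun w hw huw => ?_
  · exact G.ne_of_adj hxv (hleaf v hv huv).symm
  · exact hleaf w hw huw ▸ hxv.symm

end Fold

lemma posPart_sub_eq_and_negPart_sub_eq {a b : ℝ} (ha : 0 ≤ a) (hb : 0 ≤ b)
    (hab : a = 0 ∨ b = 0) : (a - b)⁺ = a ∧ (a - b)⁻ = b := by
  rcases hab with rfl | rfl
  · simp [hb]
  · simp [ha]

section Matching

variable {V ι : Type*} {G : SimpleGraph V} {e : ι × Fin 2 → V}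

noncomputable def matchingPoint (e : ι × Fin 2 → V) (y : ι → ℝ) : V → ℝ :=
  extend e (fun a => ![(y a.1)⁺, (y a.1)⁻] a.2) 0

def matchingCoords (e : ι × Fin 2 → V) (f : V → ℝ) : ι → ℝ :=
  fun i => f (e (i, 0)) - f (e (i, 1))

lemma matchingPoint_apply (he : Injective e) (y : ι → ℝ) (a : ι × Fin 2) :
    matchingPoint e y (e a) = ![(y a.1)⁺, (y a.1)⁻] a.2 :=
  he.extend_apply _ _ a

lemma matchingPoint_of_notMem_range (y : ι → ℝ) {v : V} (hv : v ∉ range e) :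
    matchingPoint e y v = 0 :=
  extend_apply' _ _ v hv

lemma continuous_matchingPoint (he : Injective e) : Continuous (matchingPoint e) := by
  refine continuous_pi fun v => ?_
  by_cases hv : v ∈ range e
  · obtain ⟨⟨i, s⟩, rfl⟩ := hv
    simp_rw [matchingPoint_apply he]
    fin_cases s <;> simp <;> fun_prop
  · simp_rw [matchingPoint_of_notMem_range _ hv]
    exact continuous_const

lemma continuous_matchingCoords : Continuous (matchingCoords e) := by
  unfold matchingCoords
  fun_prop

lemma matchingCoords_matchingPoint (he : Injective e) (y : ι → ℝ) :
    matchingCoords e (matchingPoint e y) = y := by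
  ext i
  simp [matchingCoords, matchingPoint_apply he, posPart_sub_negPart]

variable [Fintype V] [Fintype ι]

lemma sum_matchingPoint (he : Injective e) (y : ι → ℝ) :
    ∑ v, matchingPoint e y v = ∑ i, |y i| := calc
  _ = ∑ a : ι × Fin 2, ![(y a.1)⁺, (y a.1)⁻] a.2 :=
    (Fintype.sum_of_injective e he _ _ (fun _ => matchingPoint_of_notMem_range y)
      fun a => (matchingPoint_apply he y a).symm).symm
  _ = ∑ i, |y i| := by simp [Fintype.sum_prod_type, posPart_add_negPart]

lemma mem_sphere_one_iff_sum_abs {y : WithLp 1 (ι → ℝ)} :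
    y ∈ Metric.sphere 0 1 ↔ ∑ i, |y.ofLp i| = 1 := by
  simp [PiLp.norm_eq_of_L1]

variable (hadj : ∀ a b, G.Adj (e a) (e b) ↔ a.1 = b.1 ∧ a.2 ≠ b.2)
include hadj

omit [Fintype V] [Fintype ι] in
lemma apply_eq_zero_or_apply_eq_zero {f : V → ℝ} (hf : isIndepSet G (support f)) (i : ι) :
    f (e (i, 0)) = 0 ∨ f (e (i, 1)) = 0 := by
  by_contra! h
  have hne : e (i, 0) ≠ e (i, 1) := G.ne_of_adj ((hadj _ _).2 ⟨rfl, by simp⟩)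
  exact hf h.1 h.2 hne ((hadj _ _).2 ⟨rfl, by simp⟩)

lemma matchingPoint_mem (he : Injective e) {y : ι → ℝ} (hy : ∑ i, |y i| = 1) :
    matchingPoint e y ∈ indRealizationIn G (range e) := by
  have hsupp : support (matchingPoint e y) ⊆ range e := fun v hv => by
    by_contra h
    exact hv (matchingPoint_of_notMem_range y h)
  refine mem_indRealizationIn_iff.2 ⟨fun v => ?_, hsupp, ?_, (sum_matchingPoint he y).trans hy⟩
  · by_cases hv : v ∈ range e
    · obtain ⟨⟨i, s⟩, rfl⟩ := hv
      rw [matchingPoint_apply he]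
      fin_cases s <;> simp [posPart_nonneg, negPart_nonneg]
    · simp [matchingPoint_of_notMem_range y hv]
  · rintro _ hx _ hz hxz hadjxz
    obtain ⟨⟨i, s⟩, rfl⟩ := hsupp hx
    obtain ⟨⟨j, t⟩, rfl⟩ := hsupp hz
    obtain ⟨rfl, hst⟩ := (hadj _ _).1 hadjxz
    rw [mem_support, matchingPoint_apply he] at hx hz
    fin_cases s <;> fin_cases t <;> simp at hst hx hz <;> linarith

lemma matchingPoint_matchingCoords (he : Injective e) {f : V → ℝ}
    (hf : f ∈ indRealizationIn G (range e)) : matchingPoint e (matchingCoords e f) = f := by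
  obtain ⟨h0, hS, hind, -⟩ := mem_indRealizationIn_iff.1 hf
  ext v
  by_cases hv : v ∈ range e
  · obtain ⟨⟨i, s⟩, rfl⟩ := hv
    have := posPart_sub_eq_and_negPart_sub_eq (h0 (e (i, 0))) (h0 (e (i, 1)))
      (apply_eq_zero_or_apply_eq_zero hadj hind i)
    rw [matchingPoint_apply he]
    fin_cases s <;> simp [matchingCoords, this]
  · rw [matchingPoint_of_notMem_range _ hv, eq_comm, ← notMem_support]
    exact fun h => hv (hS h)

lemma sum_abs_matchingCoords (he : Injective e) {f : V → ℝ}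
    (hf : f ∈ indRealizationIn G (range e)) : ∑ i, |matchingCoords e f i| = 1 := by
  rw [← sum_matchingPoint he, matchingPoint_matchingCoords hadj he hf]
  exact (mem_indRealizationIn_iff.1 hf).2.2.2

noncomputable def indMatchingHomeomorph (he : Injective e) :
    indRealizationIn G (range e) ≃ₜ Metric.sphere (0 : WithLp 1 (ι → ℝ)) 1 where
  toFun f := ⟨WithLp.toLp 1 (matchingCoords e f),
    mem_sphere_one_iff_sum_abs.2 (sum_abs_matchingCoords hadj he f.2)⟩
  invFun y := ⟨matchingPoint e y.1.ofLp,
    matchingPoint_mem hadj he (mem_sphere_one_iff_sum_abs.1 y.2)⟩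
  left_inv f := Subtype.ext (matchingPoint_matchingCoords hadj he f.2)
  right_inv y := Subtype.ext <| by simp [matchingCoords_matchingPoint he]
  continuous_toFun := ((PiLp.continuous_toLp 1 _).comp
    (continuous_matchingCoords.comp continuous_subtype_val)).subtype_mk _
  continuous_invFun := ((continuous_matchingPoint he).comp (by fun_prop)).subtype_mk _

end Matching

section UnitSphere

variable {E F : Type*} [NormedAddCommGroup E] [NormedSpace ℝ E] [NormedAddCommGroup F]
  [NormedSpace ℝ F]

lemma inv_norm_smul_mem_sphere {x : E} (hx : x ≠ 0) : ‖x‖⁻¹ • x ∈ Metric.sphere (0 : E) 1 :=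
  mem_sphere_zero_iff_norm.2 (norm_smul_inv_norm hx)

lemma inv_norm_smul_smul_of_norm_eq_one {c : ℝ} (hc : 0 < c) {x : E} (hx : ‖x‖ = 1) :
    ‖c • x‖⁻¹ • c • x = x := by
  rw [norm_smul, hx, Real.norm_of_nonneg hc.le, mul_one, inv_smul_smul₀ hc.ne']

lemma continuous_inv_norm_smul_unitSphere (L : E →L[ℝ] F)
    (hL : ∀ x : Metric.sphere (0 : E) 1, L x ≠ 0) :
    Continuous fun x : Metric.sphere (0 : E) 1 => ‖L x‖⁻¹ • L x := by
  have h : Continuous fun x : Metric.sphere (0 : E) 1 => L x :=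
    L.continuous.comp continuous_subtype_val
  exact (h.norm.inv₀ fun x => norm_ne_zero_iff.2 (hL x)).smul h

noncomputable def ContinuousLinearEquiv.unitSphereHomeomorph (L : E ≃L[ℝ] F) :
    Metric.sphere (0 : E) 1 ≃ₜ Metric.sphere (0 : F) 1 where
  toFun x := ⟨‖L x‖⁻¹ • L x,
    inv_norm_smul_mem_sphere (L.map_ne_zero_iff.2 (ne_zero_of_mem_unit_sphere x))⟩
  invFun y := ⟨‖L.symm y‖⁻¹ • L.symm y,
    inv_norm_smul_mem_sphere (L.symm.map_ne_zero_iff.2 (ne_zero_of_mem_unit_sphere y))⟩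
  left_inv x := Subtype.ext <| by
    simp only [map_smul, symm_apply_apply]
    exact inv_norm_smul_smul_of_norm_eq_one (by simp [ne_zero_of_mem_unit_sphere x])
      (norm_eq_of_mem_sphere x)
  right_inv y := Subtype.ext <| by
    simp only [map_smul, apply_symm_apply]
    exact inv_norm_smul_smul_of_norm_eq_one (by simp [ne_zero_of_mem_unit_sphere y])
      (norm_eq_of_mem_sphere y)
  continuous_toFun := (continuous_inv_norm_smul_unitSphere (L : E →L[ℝ] F)
    fun x => L.map_ne_zero_iff.2 (ne_zero_of_mem_unit_sphere x)).subtype_mk _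
  continuous_invFun := (continuous_inv_norm_smul_unitSphere (L.symm : F →L[ℝ] E)
    fun y => L.symm.map_ne_zero_iff.2 (ne_zero_of_mem_unit_sphere y)).subtype_mk _

end UnitSphere

section Hex

variable {n : ℕ}

lemma hexRow_adj_iff {v w : Fin 2 × Fin (2 * n + 1)} :
    (hexRow n).Adj v w ↔
      ((v.1 : ℕ) = w.1 ∧ ((v.2 : ℕ) + 1 = w.2 ∨ (w.2 : ℕ) + 1 = v.2)) ∨
      ((v.1 : ℕ) ≠ w.1 ∧ (v.2 : ℕ) = w.2 ∧ (v.2 : ℕ) % 2 = 0) := by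
  simp only [hexRow, SimpleGraph.fromRel_adj, Prod.ext_iff, Fin.ext_iff, ne_eq]
  omega

def hexMatching (n : ℕ) : Set (Fin 2 × Fin (2 * n + 1)) :=
  {v | ((v.2 : ℕ) < 2 * n ∧ (v.1 : ℕ) = (n + v.2 / 2 + 1) % 2) ∨
    ((v.1 : ℕ) = 1 ∧ 2 * n ≤ v.2 + 1)}

def hexStage (n c : ℕ) : Set (Fin 2 × Fin (2 * n + 1)) :=
  {v | (v.2 : ℕ) < c} ∪ hexMatching n

lemma compl_hexTop_eq_hexStage (hn : 1 ≤ n) : {hexTop n}ᶜ = hexStage n (2 * n - 1) := by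
  ext ⟨r, c⟩
  simp only [hexTop, hexStage, hexMatching, mem_compl_iff, mem_singleton_iff, mem_union,
    mem_ofPred_eq, Prod.ext_iff, Fin.ext_iff]
  omega

-- The vertex of column `c` outside the matching is adjacent to the end `x` of the matching edge
-- `j = (c + 1) / 2`, whose other end `u` is a leaf of `hexStage n (c + 1)`.
lemma nonempty_homotopyEquiv_hexStage_succ {c : ℕ} (hc : c + 1 < 2 * n) :
    Nonempty (indRealizationIn (hexRow n) (hexStage n (c + 1)) ≃ₕ
      indRealizationIn (hexRow n) (hexStage n c)) := by
  set j := (c + 1) / 2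
  have hdel : hexStage n (c + 1) \ {(⟨1 - (n + c / 2 + 1) % 2, by omega⟩, ⟨c, by omega⟩)} =
      hexStage n c := by
    ext ⟨r, c'⟩
    simp only [hexStage, hexMatching, mem_sdiff, mem_union, mem_ofPred_eq, mem_singleton_iff,
      Prod.ext_iff, Fin.ext_iff]
    omega
  rw [← hdel]
  refine nonempty_homotopyEquiv_diff_of_leaf
    (u := (⟨(n + j + 1) % 2, by omega⟩, ⟨2 * j + 1, by omega⟩))
    (x := (⟨(n + j + 1) % 2, by omega⟩, ⟨2 * j, by omega⟩)) ?_ ?_ ?_ ?_ ?_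
  · simp only [hexStage, hexMatching, mem_union, mem_ofPred_eq]
    omega
  · simp only [hexStage, hexMatching, mem_union, mem_ofPred_eq]
    omega
  · rintro ⟨r, c'⟩ hw hadj
    simp only [hexStage, hexMatching, mem_union, mem_ofPred_eq] at hw
    rw [hexRow_adj_iff] at hadj
    simp only [Prod.ext_iff, Fin.ext_iff] at hadj ⊢
    omega
  · rw [hexRow_adj_iff]
    dsimp only
    omega
  · simp only [ne_eq, Prod.ext_iff, Fin.ext_iff]
    omega

lemma nonempty_homotopyEquiv_hexStage_hexMatching {c : ℕ} (hc : c < 2 * n) :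
    Nonempty (indRealizationIn (hexRow n) (hexStage n c) ≃ₕ
      indRealizationIn (hexRow n) (hexMatching n)) := by
  induction c with
  | zero =>
    rw [show hexStage n 0 = hexMatching n by simp [hexStage]]
    exact ⟨.refl _⟩
  | succ c ih =>
    obtain ⟨h₁⟩ := nonempty_homotopyEquiv_hexStage_succ hc
    obtain ⟨h₂⟩ := ih (by omega)
    exact ⟨h₁.trans h₂⟩

def hexMatchingEdge (n : ℕ) (a : Fin (n + 1) × Fin 2) : Fin 2 × Fin (2 * n + 1) :=
  if h : (a.1 : ℕ) < n then (⟨(n + a.1 + 1) % 2, by omega⟩, ⟨2 * a.1 + a.2, by omega⟩)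
  else (1, ⟨2 * n + a.2 - 1, by omega⟩)

variable (hn : 1 ≤ n)
include hn

lemma hexMatchingEdge_injective : Injective (hexMatchingEdge n) := by
  rintro ⟨i, s⟩ ⟨j, t⟩ h
  simp only [hexMatchingEdge, Prod.ext_iff, Fin.ext_iff] at h ⊢
  split_ifs at h <;> simp at h <;> omega

lemma hexMatchingEdge_adj_iff (a b : Fin (n + 1) × Fin 2) :
    (hexRow n).Adj (hexMatchingEdge n a) (hexMatchingEdge n b) ↔ a.1 = b.1 ∧ a.2 ≠ b.2 := by
  rcases a with ⟨i, s⟩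
  rcases b with ⟨j, t⟩
  simp only [hexRow_adj_iff, hexMatchingEdge, ne_eq, Fin.ext_iff]
  split_ifs <;> simp <;> omega

lemma range_hexMatchingEdge : range (hexMatchingEdge n) = hexMatching n := by
  ext ⟨r, c⟩
  simp only [mem_range, hexMatching, mem_ofPred_eq]
  constructor
  · rintro ⟨⟨i, s⟩, h⟩
    simp only [hexMatchingEdge, Prod.ext_iff, Fin.ext_iff] at h
    split_ifs at h <;> simp at h <;> omega
  · intro h
    by_cases hc : (c : ℕ) < 2 * n - 1 ∨ (r : ℕ) = 0
    · refine ⟨(⟨c / 2, by omega⟩, ⟨c % 2, by omega⟩), ?_⟩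
      simp only [hexMatchingEdge, Prod.ext_iff, Fin.ext_iff]
      split_ifs <;> simp <;> omega
    · refine ⟨(⟨n, by omega⟩, ⟨c + 1 - 2 * n, by omega⟩), ?_⟩
      simp only [hexMatchingEdge, Prod.ext_iff, Fin.ext_iff]
      split_ifs <;> simp <;> omega

end Hex

/-- for `n ≥ 1`, `Ind (X_n^{(1)}) ≃ S^n`, where
`X_n^{(1)} = H_{1×1×n} \ {v^1_{2n+1}}`. -/
theorem ind_Xn1 (n : ℕ) (hn : 1 ≤ n) :
    Nonempty (ContinuousMap.HomotopyEquiv (↥(Xn1 n)) (↥(sphere' (n + 1)))) := by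
  obtain ⟨h⟩ := nonempty_homotopyEquiv_hexStage_hexMatching (n := n) (c := 2 * n - 1) (by omega)
  rw [← compl_hexTop_eq_hexStage hn, ← range_hexMatchingEdge hn] at h
  let L : WithLp 1 (Fin (n + 1) → ℝ) ≃L[ℝ] EuclideanSpace ℝ (Fin (n + 1)) :=
    (PiLp.continuousLinearEquiv 1 ℝ _).trans (PiLp.continuousLinearEquiv 2 ℝ _).symm
  exact ⟨h.trans ((indMatchingHomeomorph (hexMatchingEdge_adj_iff hn)
    (hexMatchingEdge_injective hn)).trans L.unitSphereHomeomorph).toHomotopyEquiv⟩
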